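/- Let j ≥ 0 and k ≥ 1. For all n ≥ 1, the preimage (F_k^j)^{-1}({n}) equals the integer interval (L_k^j(n-1), L_k^j(n)] ∩ ℕ. Equivalently, for all m ≥ 1 one has L_k^j(F_k^j(m) - 1) < m ≤ L_k^j(F_k^j(m)). -/

import Mathlib

/-- The substitution τ_k, applied to a single letter: τ_k(k) = k1 and τ_k(i) = i+1 for i ≠ k. -/
def tauLetter (k i : ℕ) : List ℕ := if i = k then [k, 1] else [i + 1]

/-- The substitution τ_k, extended to finite words (lists of letters) by concatenation. -/
def tauWord (k : ℕ) (w : List ℕ) : List ℕ := w.flatMap (tauLetter k)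

/-- The infinite fixed point x_k of τ_k (starting with the letter k): its n-th letter is the
n-th letter of any sufficiently long iterate τ_k^j(k), here j = n+1. -/
def xk (k n : ℕ) : ℕ := ((tauWord k)^[n + 1] [k]).getD n 0

/-- L_k(n) = |τ_k(x_k[0:n))|, the length of the τ_k-image of the prefix of x_k of length n. -/
def Lk (k n : ℕ) : ℕ := (tauWord k ((List.range n).map (xk k))).length

/-- C_k^{(=i)}(n): the number of occurrences of the letter i among x_k[0],...,x_k[n-1]. -/
def Ceq (k i n : ℕ) : ℕ := ((Finset.range n).filter (fun m => xk k m = i)).card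

/-- C_k^{(>j)}(n): the number of positions m < n with x_k[m] > j. -/
def Cgt (k j n : ℕ) : ℕ := ((Finset.range n).filter (fun m => j < xk k m)).card

/-!
Let `G m = min {n | m ≤ L_k n}` be the lower adjoint of the strictly increasing map `L_k`.
Iterates of a Galois connection are again one, so `G^j m ≤ n ↔ m ≤ L_k^j n`, which is the
interval description; it remains to see that `F_k = G`, i.e. that `G` satisfies the recurrence
defining `F_k`.

Since `x_k[0:L_k n) = τ_k(x_k[0:n))` and `τ_k` raises every letter below `k` by one, `G^i t`
counts the letters `> i` in `x_k[0:t)` for `i < k`; for `i = k - 1` these are the letters `k`,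
of which there are `L_k t - t`. As `L_k` has steps `1` or `2`,
`G m + L_k (G (m - 1)) = m + G (m - 1)`, and together this gives `G m = m - G^k (m - 1)`.
-/

open Function

theorem GaloisConnection.iterate {α : Type*} [Preorder α] {f g : α → α}
    (gc : GaloisConnection f g) (j : ℕ) : GaloisConnection f^[j] g^[j] := by
  induction j with
  | zero => exact GaloisConnection.id
  | succ j ih => rw [iterate_succ, iterate_succ']; exact gc.compose ih

theorem eq_of_hofstadter_rec {k : ℕ} {f g : ℕ → ℕ}
    (hf0 : f 0 = 0) (hf : ∀ n, 1 ≤ n → f n = n - f^[k] (n - 1))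
    (hg0 : g 0 = 0) (hg : ∀ n, 1 ≤ n → g n = n - g^[k] (n - 1)) : f = g := by
  have hf_le : ∀ n, f n ≤ n := by
    rintro (_ | n)
    · simp [hf0]
    · simp [hf (n + 1) (by omega)]
  funext n
  induction n using Nat.strong_induction_on with
  | _ n ih =>
    rcases Nat.eq_zero_or_pos n with rfl | hn
    · rw [hf0, hg0]
    · have hiter : ∀ i, f^[i] (n - 1) = g^[i] (n - 1) ∧ f^[i] (n - 1) ≤ n - 1 := by
        intro i
        induction i with
        | zero => simp
        | succ i ihi =>
          rw [iterate_succ_apply', iterate_succ_apply', ← ihi.1]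
          exact ⟨ih _ (by omega), (hf_le _).trans ihi.2⟩
      rw [hf n hn, hg n hn, (hiter k).1]

section LowerAdjoint

variable {L : ℕ → ℕ}

noncomputable def lowerAdjoint (L : ℕ → ℕ) (m : ℕ) : ℕ := sInf {n | m ≤ L n}

theorem gc_lowerAdjoint (hL : StrictMono L) : GaloisConnection (lowerAdjoint L) L := fun m _ =>
  ⟨fun h => (Nat.sInf_mem (s := {n | m ≤ L n}) ⟨m, hL.le_apply⟩).trans (hL.monotone h),
    fun h => Nat.sInf_le h⟩

theorem lowerAdjoint_zero (hL : StrictMono L) : lowerAdjoint L 0 = 0 :=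
  Nat.le_zero.mp ((gc_lowerAdjoint hL).le_iff_le.mpr (Nat.zero_le _))

theorem lowerAdjoint_add_apply_lowerAdjoint_pred (hL : StrictMono L) (h0 : L 0 = 0)
    (h2 : ∀ n, L (n + 1) ≤ L n + 2) {m : ℕ} (hm : 1 ≤ m) :
    lowerAdjoint L m + L (lowerAdjoint L (m - 1)) = m + lowerAdjoint L (m - 1) := by
  have gc := gc_lowerAdjoint hL
  set a := lowerAdjoint L (m - 1)
  have hma : m - 1 ≤ L a := gc.le_u_l _
  by_cases h : m ≤ L a
  · have hGm : lowerAdjoint L m = a :=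
      le_antisymm (gc.le_iff_le.mpr h) (gc.monotone_l (by omega))
    have ha : a ≠ 0 := by rintro ha; rw [ha, h0] at h; omega
    have hprev : ¬ m - 1 ≤ L (a - 1) := by rw [← gc.le_iff_le]; omega
    have := h2 (a - 1)
    rw [Nat.sub_add_cancel (Nat.one_le_iff_ne_zero.mpr ha)] at this
    omega
  · have hGm : lowerAdjoint L m = a + 1 := by
      have h1 : lowerAdjoint L m ≤ a + 1 :=
        gc.le_iff_le.mpr (by have := hL (show a < a + 1 by omega); omega)
      have h2 : ¬ lowerAdjoint L m ≤ a := by rwa [gc.le_iff_le]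
      omega
    omega

theorem exists_eq_of_lt_apply_lowerAdjoint (hL : StrictMono L) (h0 : L 0 = 0)
    (h2 : ∀ n, L (n + 1) ≤ L n + 2) {t : ℕ} (ht : t < L (lowerAdjoint L t)) :
    ∃ s, L s + 1 = t ∧ L (s + 1) = t + 1 ∧ lowerAdjoint L t = s + 1 := by
  have gc := gc_lowerAdjoint hL
  obtain ⟨s, hs⟩ : ∃ s, lowerAdjoint L t = s + 1 :=
    Nat.exists_eq_add_one.mpr (Nat.pos_of_ne_zero fun h => by rw [h, h0] at ht; omega)
  have hlt : ¬ t ≤ L s := by rw [← gc.le_iff_le]; omega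
  have := h2 s
  rw [hs] at ht
  exact ⟨s, by omega, by omega, hs⟩

end LowerAdjoint

section Substitution

variable {k : ℕ}

@[simp] theorem tauWord_nil : tauWord k [] = [] := rfl

@[simp] theorem tauWord_cons (a : ℕ) (w : List ℕ) :
    tauWord k (a :: w) = tauLetter k a ++ tauWord k w :=
  List.flatMap_cons

@[simp] theorem tauWord_append (w v : List ℕ) :
    tauWord k (w ++ v) = tauWord k w ++ tauWord k v :=
  List.flatMap_append

theorem length_tauWord (w : List ℕ) : (tauWord k w).length = w.length + w.count k := by
  induction w with
  | nil => rfl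
  | cons a w ih =>
    rw [tauWord_cons, List.length_append, ih, List.count_cons]
    by_cases h : a = k <;> simp [tauLetter, h] <;> omega

theorem countP_tauWord {i : ℕ} (hi : i + 1 < k) (w : List ℕ) :
    (tauWord k w).countP (fun a => i + 1 < a) = w.countP (fun a => i < a) := by
  induction w with
  | nil => rfl
  | cons a w ih =>
    rw [tauWord_cons, List.countP_append, List.countP_cons, ih]
    by_cases h : a = k
    · simp [tauLetter, h, hi, show i < k by omega, add_comm]
    · simp [tauLetter, h, add_comm]

theorem mem_Icc_of_mem_tauWord (hk : 1 ≤ k) {w : List ℕ} (hw : ∀ a ∈ w, a ∈ Set.Icc 1 k) :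
    ∀ a ∈ tauWord k w, a ∈ Set.Icc 1 k := by
  simp only [tauWord, List.mem_flatMap, tauLetter]
  rintro a ⟨b, hb, hab⟩
  have := hw b hb
  split_ifs at hab with h <;> simp at hab <;> simp at this ⊢ <;> omega

/-- The finite words `τ_k^j(k)`, all prefixes of `x_k`. -/
def tauIterate (k j : ℕ) : List ℕ := (tauWord k)^[j] [k]

theorem tauIterate_succ (j : ℕ) : tauIterate k (j + 1) = tauWord k (tauIterate k j) :=
  iterate_succ_apply' _ _ _

theorem tauIterate_prefix_succ (j : ℕ) : tauIterate k j <+: tauIterate k (j + 1) := by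
  induction j with
  | zero => exact ⟨[1], by simp [tauIterate, tauWord, tauLetter]⟩
  | succ j ih => convert ih.flatMap (tauLetter k) using 1 <;> exact tauIterate_succ _

theorem tauIterate_prefix {i j : ℕ} (h : i ≤ j) : tauIterate k i <+: tauIterate k j := by
  induction j, h using Nat.le_induction with
  | base => exact List.prefix_refl _
  | succ j _ ih => exact ih.trans (tauIterate_prefix_succ j)

theorem lt_length_tauIterate (j : ℕ) : j < (tauIterate k j).length := by
  induction j with
  | zero => simp [tauIterate]
  | succ j ih =>
    have hk : k ∈ tauIterate k j :=
      (tauIterate_prefix (Nat.zero_le j)).subset (by simp [tauIterate])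
    rw [tauIterate_succ, length_tauWord]
    have := List.count_pos_iff.mpr hk
    omega

theorem mem_Icc_of_mem_tauIterate (hk : 1 ≤ k) (j : ℕ) :
    ∀ a ∈ tauIterate k j, a ∈ Set.Icc 1 k := by
  induction j with
  | zero => simp [tauIterate, hk]
  | succ j ih => rw [tauIterate_succ]; exact mem_Icc_of_mem_tauWord hk ih

end Substitution

section FixedPoint

variable {k : ℕ}

/-- The prefix `x_k[0:n)`. -/
def xkPrefix (k n : ℕ) : List ℕ := (List.range n).map (xk k)

theorem length_xkPrefix (n : ℕ) : (xkPrefix k n).length = n := by simp [xkPrefix]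

theorem xkPrefix_succ (n : ℕ) : xkPrefix k (n + 1) = xkPrefix k n ++ [xk k n] := by
  simp [xkPrefix, List.range_succ]

theorem xkPrefix_eq_take {n j : ℕ} (h : n ≤ j) : xkPrefix k n = (tauIterate k j).take n := by
  have := lt_length_tauIterate (k := k) j
  apply List.ext_getElem (by simp [xkPrefix]; omega)
  intro i hi _
  rw [length_xkPrefix] at hi
  have hi' : i < (tauIterate k (i + 1)).length :=
    (Nat.lt_succ_self i).trans (lt_length_tauIterate (i + 1))
  simp only [xkPrefix, List.getElem_map, List.getElem_range, List.getElem_take]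
  show (tauIterate k (i + 1)).getD i 0 = _
  rw [List.getD_eq_getElem _ _ hi', (tauIterate_prefix (show i + 1 ≤ j by omega)).getElem hi']

theorem mem_Icc_of_mem_xkPrefix (hk : 1 ≤ k) {n a : ℕ} (h : a ∈ xkPrefix k n) :
    a ∈ Set.Icc 1 k := by
  rw [xkPrefix_eq_take le_rfl] at h
  exact mem_Icc_of_mem_tauIterate hk n a (List.mem_of_mem_take h)

theorem Lk_eq_length (n : ℕ) : Lk k n = (tauWord k (xkPrefix k n)).length := rfl

theorem tauWord_xkPrefix (n : ℕ) : tauWord k (xkPrefix k n) = xkPrefix k (Lk k n) := by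
  have hpre : tauWord k (xkPrefix k n) <+: tauIterate k (Lk k n + n + 1) := by
    have h1 : xkPrefix k n <+: tauIterate k n := xkPrefix_eq_take le_rfl ▸ List.take_prefix _ _
    have h2 := tauIterate_prefix (k := k) (show n + 1 ≤ Lk k n + n + 1 by omega)
    rw [tauIterate_succ] at h2
    exact (h1.flatMap (tauLetter k)).trans h2
  rw [xkPrefix_eq_take (n := Lk k n) (j := Lk k n + n + 1) (by omega)]
  exact List.prefix_iff_eq_take.mp hpre

theorem Lk_zero (k : ℕ) : Lk k 0 = 0 := rfl

theorem Lk_succ (n : ℕ) : Lk k (n + 1) = Lk k n + (tauLetter k (xk k n)).length := by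
  simp [Lk_eq_length, xkPrefix_succ]

theorem Lk_eq_add_count (n : ℕ) : Lk k n = n + (xkPrefix k n).count k := by
  rw [Lk_eq_length, length_tauWord, length_xkPrefix]

theorem Lk_strictMono (k : ℕ) : StrictMono (Lk k) :=
  strictMono_nat_of_lt_succ fun n => by rw [Lk_succ]; unfold tauLetter; split <;> simp

theorem Lk_succ_le (k n : ℕ) : Lk k (n + 1) ≤ Lk k n + 2 := by
  rw [Lk_succ]; unfold tauLetter; split <;> simp

theorem xkPrefix_Lk_succ (n : ℕ) :
    xkPrefix k (Lk k (n + 1)) = xkPrefix k (Lk k n) ++ tauLetter k (xk k n) := by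
  rw [← tauWord_xkPrefix, ← tauWord_xkPrefix, xkPrefix_succ]
  simp

theorem xk_Lk_add_one {n : ℕ} (h : Lk k (n + 1) = Lk k n + 2) : xk k (Lk k n + 1) = 1 := by
  have hn : xk k n = k := by
    by_contra hne
    rw [Lk_succ, tauLetter, if_neg hne] at h
    simp at h
  have := xkPrefix_Lk_succ (k := k) n
  rw [h, show Lk k n + 2 = Lk k n + 1 + 1 from rfl, xkPrefix_succ, xkPrefix_succ, hn, tauLetter,
    if_pos rfl] at this
  simp at this
  exact this.2

theorem Cgt_eq_countP (i n : ℕ) : Cgt k i n = (xkPrefix k n).countP (fun a => i < a) := by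
  induction n with
  | zero => rfl
  | succ n ih =>
    rw [xkPrefix_succ, List.countP_append, ← ih, Cgt, Finset.range_add_one, Finset.filter_insert]
    split_ifs with h <;> simp [Cgt, h]

end FixedPoint

section Counting

variable {k : ℕ}

theorem Cgt_succ (i n : ℕ) : Cgt k i (n + 1) = Cgt k i n + if i < xk k n then 1 else 0 := by
  simp [Cgt_eq_countP, xkPrefix_succ]

theorem Cgt_zero_left (hk : 1 ≤ k) (n : ℕ) : Cgt k 0 n = n := by
  rw [Cgt_eq_countP, List.countP_eq_length.mpr, length_xkPrefix]
  intro a ha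
  exact decide_eq_true (mem_Icc_of_mem_xkPrefix hk ha).1

theorem Cgt_pred_self (hk : 1 ≤ k) (n : ℕ) : Cgt k (k - 1) n = Lk k n - n := by
  rw [Cgt_eq_countP, Lk_eq_add_count, List.count_eq_countP, Nat.add_sub_cancel_left]
  refine List.countP_congr fun a ha => ?_
  have := mem_Icc_of_mem_xkPrefix hk ha
  simp only [Set.mem_Icc] at this
  simp only [decide_eq_true_eq, beq_iff_eq]
  omega

theorem Cgt_succ_Lk {i : ℕ} (hi : i + 1 < k) (n : ℕ) : Cgt k (i + 1) (Lk k n) = Cgt k i n := by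
  rw [Cgt_eq_countP, Cgt_eq_countP, ← tauWord_xkPrefix, countP_tauWord hi]

/-- A position strictly inside a block `τ_k(x_k[s])` carries the letter `1`, which no
`Cgt k (i + 1)` counts. -/
theorem Cgt_succ_Lk_lowerAdjoint (i t : ℕ) :
    Cgt k (i + 1) (Lk k (lowerAdjoint (Lk k) t)) = Cgt k (i + 1) t := by
  rcases ((gc_lowerAdjoint (Lk_strictMono k)).le_u_l t).eq_or_lt with h | h
  · rw [← h]
  · obtain ⟨s, hs, hs1, hG⟩ :=
      exists_eq_of_lt_apply_lowerAdjoint (Lk_strictMono k) (Lk_zero k) (Lk_succ_le k) h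
    have hx : xk k t = 1 := hs ▸ xk_Lk_add_one (by omega)
    rw [hG, hs1, Cgt_succ, hx]
    simp

theorem lowerAdjoint_Lk_iterate (hk : 1 ≤ k) {i : ℕ} (hi : i < k) (t : ℕ) :
    (lowerAdjoint (Lk k))^[i] t = Cgt k i t := by
  induction i generalizing t with
  | zero => exact (Cgt_zero_left hk t).symm
  | succ i ih =>
    rw [iterate_succ_apply, ih (by omega), ← Cgt_succ_Lk hi, Cgt_succ_Lk_lowerAdjoint]

theorem lowerAdjoint_Lk_eq_sub (hk : 1 ≤ k) {m : ℕ} (hm : 1 ≤ m) :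
    lowerAdjoint (Lk k) m = m - (lowerAdjoint (Lk k))^[k] (m - 1) := by
  have hsum := lowerAdjoint_add_apply_lowerAdjoint_pred (Lk_strictMono k) (Lk_zero k)
    (Lk_succ_le k) hm
  set a := lowerAdjoint (Lk k) (m - 1)
  have hiter : (lowerAdjoint (Lk k))^[k] (m - 1) = Lk k a - a := by
    rw [← Nat.sub_add_cancel hk, iterate_succ_apply, Nat.sub_add_cancel hk,
      lowerAdjoint_Lk_iterate hk (by omega), Cgt_pred_self hk]
  have ha : a ≤ Lk k a := (Lk_strictMono k).le_apply
  omega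

end Counting

/-- For n ≥ 1, the preimage of {n} under F_k^j is the integer interval
(L_k^j(n-1), L_k^j(n)]; equivalently, L_k^j(F_k^j(m)-1) < m ≤ L_k^j(F_k^j(m)) for all m ≥ 1. -/
theorem stmt3 (k j : ℕ) (hk : 1 ≤ k) (F : ℕ → ℕ)
    (hF0 : F 0 = 0) (hF : ∀ n, 1 ≤ n → F n = n - F^[k] (n - 1)) :
    (∀ n, 1 ≤ n → {m : ℕ | F^[j] m = n} = Set.Ioc ((Lk k)^[j] (n - 1)) ((Lk k)^[j] n)) ∧
    (∀ m, 1 ≤ m → (Lk k)^[j] (F^[j] m - 1) < m ∧ m ≤ (Lk k)^[j] (F^[j] m)) := by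
  obtain rfl : F = lowerAdjoint (Lk k) := eq_of_hofstadter_rec hF0 hF
    (lowerAdjoint_zero (Lk_strictMono k)) fun m hm => lowerAdjoint_Lk_eq_sub hk hm
  have gc := (gc_lowerAdjoint (Lk_strictMono k)).iterate j
  have hzero : (Lk k)^[j] 0 = 0 := iterate_fixed (Lk_zero k) j
  refine ⟨fun n hn => ?_, fun m hm => ?_⟩
  · ext m
    have h1 := gc.le_iff_le (a := m) (b := n)
    have h2 := gc.le_iff_le (a := m) (b := n - 1)
    simp only [Set.mem_ofPred_eq, Set.mem_Ioc]
    omega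
  · have h1 := gc.le_iff_le (a := m) (b := (lowerAdjoint (Lk k))^[j] m - 1)
    have h2 := gc.le_iff_le (a := m) (b := 0)
    rw [hzero] at h2
    exact ⟨by omega, gc.le_u_l m⟩
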